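/- arXiv:2305.18193 — 3 statements merged into one kernel-verified Lean document; each statement's English description precedes it below -/
import Mathlib

section
/- Let x, z ∈ ℝ³ with x ≠ z, let Δ = ‖z − x‖₂, and for δ ≥ 0 define h_δ(x, z) = (z − x)/√(Δ² + δ²). Then the Jacobian of h_δ with respect to x satisfies (∂h_δ/∂x)ᵀ(∂h_δ/∂x) = (1/(Δ² + δ²))·(I₃ − ((Δ² + 2δ²)/(Δ² + δ²)²)(z − x)(z − x)ᵀ). -/
/-!
Write `v = z - x` and `r = ‖v‖² + δ²`. The Jacobian of `y ↦ (z - y) / √(‖z - y‖² + δ²)` at `x` is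
`-r^(-1/2) (I - r⁻¹ v vᵀ)`, a multiple of a symmetric matrix. Since `(v vᵀ)² = ‖v‖² v vᵀ`, its Gram
matrix is `r⁻¹ (I - (2 r⁻¹ - ‖v‖² r⁻²) v vᵀ)`, and `2 r - ‖v‖² = ‖v‖² + 2 δ²`.
-/

open Matrix

theorem Matrix.toEuclideanCLM_vecMulVec_star {𝕜 n : Type*} [RCLike 𝕜] [Fintype n] [DecidableEq n]
    (u v : EuclideanSpace 𝕜 n) :
    toEuclideanCLM (𝕜 := 𝕜) (vecMulVec u.ofLp (star v.ofLp)) = (innerSL 𝕜 v).smulRight u := by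
  ext1 w
  ext i
  simp [vecMulVec_mulVec, EuclideanSpace.inner_eq_star_dotProduct, dotProduct_comm, mul_comm]

theorem Matrix.one_sub_smul_vecMulVec_mul_self {R n : Type*} [CommRing R] [Fintype n]
    [DecidableEq n] (a : R) (v : n → R) :
    (1 - a • vecMulVec v v) * (1 - a • vecMulVec v v) =
      1 - (2 * a - a ^ 2 * (v ⬝ᵥ v)) • vecMulVec v v := by
  simp only [sub_mul, mul_sub, one_mul, mul_one, smul_mul_smul_comm, vecMulVec_mul_vecMulVec,
    vecMulVec_smul]
  module

theorem hasFDerivAt_inv_sqrt_norm_sq_add_sq_smul_sub {E : Type*} [NormedAddCommGroup E]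
    [InnerProductSpace ℝ E] {z x : E} {δ : ℝ} (hr : ‖z - x‖ ^ 2 + δ ^ 2 ≠ 0) :
    HasFDerivAt (fun y => (√(‖z - y‖ ^ 2 + δ ^ 2))⁻¹ • (z - y))
      (-(√(‖z - x‖ ^ 2 + δ ^ 2))⁻¹ • (ContinuousLinearMap.id ℝ E -
        (‖z - x‖ ^ 2 + δ ^ 2)⁻¹ • (innerSL ℝ (z - x)).smulRight (z - x))) x := by
  have hs : √(‖z - x‖ ^ 2 + δ ^ 2) ≠ 0 :=
    Real.sqrt_ne_zero'.mpr <| lt_of_le_of_ne (by positivity) hr.symm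
  have hs2 : √(‖z - x‖ ^ 2 + δ ^ 2) ^ 2 = ‖z - x‖ ^ 2 + δ ^ 2 := Real.sq_sqrt (by positivity)
  have hsub : HasFDerivAt (fun y => z - y) (-ContinuousLinearMap.id ℝ E) x :=
    (hasFDerivAt_id x).const_sub z
  have hscale := (hasDerivAt_inv hs).comp_hasFDerivAt x
    ((hsub.norm_sq.add_const (δ ^ 2)).sqrt hr)
  refine (hscale.smul hsub).congr_fderiv ?_
  ext w
  simp only [_root_.smul_apply, _root_.sub_apply, _root_.add_apply, _root_.neg_apply,
    ContinuousLinearMap.smulRight_apply, ContinuousLinearMap.comp_apply,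
    ContinuousLinearMap.id_apply, innerSL_apply_apply, Function.comp_apply, inner_neg_right, hs2,
    smul_eq_mul, nsmul_eq_mul, Nat.cast_ofNat]
  match_scalars <;> field_simp

theorem eq_of_hasFDerivAt_toLp_sub_div_sqrt {n : Type*} [Fintype n] [DecidableEq n]
    {x z : EuclideanSpace ℝ n} {δ : ℝ} (hr : ‖z - x‖ ^ 2 + δ ^ 2 ≠ 0) {D : Matrix n n ℝ}
    (hD : HasFDerivAt
      (fun y : EuclideanSpace ℝ n =>
        (WithLp.toLp 2 (fun i => (z i - y i) / √(‖z - y‖ ^ 2 + δ ^ 2)) : EuclideanSpace ℝ n))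
      (toEuclideanCLM (𝕜 := ℝ) D) x) :
    D = -(√(‖z - x‖ ^ 2 + δ ^ 2))⁻¹ •
      (1 - (‖z - x‖ ^ 2 + δ ^ 2)⁻¹ • vecMulVec (z - x).ofLp (z - x).ofLp) := by
  have hP : toEuclideanCLM (𝕜 := ℝ) (vecMulVec (z - x).ofLp (z - x).ofLp) =
      (innerSL ℝ (z - x)).smulRight (z - x) := by
    simpa using toEuclideanCLM_vecMulVec_star (z - x) (z - x)
  have hf : (fun y : EuclideanSpace ℝ n =>
        (WithLp.toLp 2 (fun i => (z i - y i) / √(‖z - y‖ ^ 2 + δ ^ 2)) : EuclideanSpace ℝ n)) =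
      fun y => (√(‖z - y‖ ^ 2 + δ ^ 2))⁻¹ • (z - y) := by
    ext y i
    simp [div_eq_inv_mul]
  have hJ : HasFDerivAt
      (fun y : EuclideanSpace ℝ n =>
        (WithLp.toLp 2 (fun i => (z i - y i) / √(‖z - y‖ ^ 2 + δ ^ 2)) : EuclideanSpace ℝ n))
      (toEuclideanCLM (𝕜 := ℝ) (-(√(‖z - x‖ ^ 2 + δ ^ 2))⁻¹ •
        (1 - (‖z - x‖ ^ 2 + δ ^ 2)⁻¹ • vecMulVec (z - x).ofLp (z - x).ofLp))) x := by
    rw [hf, map_smul, map_sub, map_one, map_smul, hP]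
    exact hasFDerivAt_inv_sqrt_norm_sq_add_sq_smul_sub hr
  exact toEuclideanCLM.injective (hD.unique hJ)

theorem stmt_8_general (x z : EuclideanSpace ℝ (Fin 3)) (hxz : x ≠ z) (δ : ℝ)
    (D : Matrix (Fin 3) (Fin 3) ℝ)
    (hD : HasFDerivAt
      (fun y : EuclideanSpace ℝ (Fin 3) =>
        (WithLp.toLp 2 (fun i => (z i - y i) / Real.sqrt (‖z - y‖ ^ 2 + δ ^ 2)) : EuclideanSpace ℝ (Fin 3)))
      (Matrix.toEuclideanCLM (𝕜 := ℝ) D) x) :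
    Dᵀ * D =
      ((‖z - x‖ ^ 2 + δ ^ 2)⁻¹) •
        ((1 : Matrix (Fin 3) (Fin 3) ℝ) -
          ((‖z - x‖ ^ 2 + 2 * δ ^ 2) / (‖z - x‖ ^ 2 + δ ^ 2) ^ 2) •
            Matrix.vecMulVec (fun i => z i - x i) (fun i => z i - x i)) := by
  set r := ‖z - x‖ ^ 2 + δ ^ 2
  have hr : 0 < r := by
    have : 0 < ‖z - x‖ := norm_pos_iff.mpr (sub_ne_zero.mpr hxz.symm)
    positivity
  have hvv : (z - x).ofLp ⬝ᵥ (z - x).ofLp = ‖z - x‖ ^ 2 := by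
    rw [← real_inner_self_eq_norm_sq, EuclideanSpace.inner_eq_star_dotProduct, star_trivial]
  have hc : -(√r)⁻¹ * -(√r)⁻¹ = r⁻¹ := by
    rw [neg_mul_neg, ← mul_inv, Real.mul_self_sqrt hr.le]
  have ha : 2 * r⁻¹ - r⁻¹ ^ 2 * ‖z - x‖ ^ 2 = (‖z - x‖ ^ 2 + 2 * δ ^ 2) / r ^ 2 := by
    field_simp
    ring
  obtain rfl := eq_of_hasFDerivAt_toLp_sub_div_sqrt hr.ne' hD
  rw [transpose_smul, transpose_sub, transpose_one, transpose_smul, transpose_vecMulVec,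
    smul_mul_smul_comm, one_sub_smul_vecMulVec_mul_self, hvv, hc, ha]
  rfl

/-- The Jacobian D of x ↦ h_δ(x,z) = (z−x)/√(‖z−x‖² + δ²) satisfies
Dᵀ D = (1/(Δ²+δ²))·(I − ((Δ²+2δ²)/(Δ²+δ²)²)(z−x)(z−x)ᵀ), where Δ = ‖z−x‖. -/
theorem stmt_8 (x z : EuclideanSpace ℝ (Fin 3)) (hxz : x ≠ z) (δ : ℝ) (hδ : 0 ≤ δ)
    (D : Matrix (Fin 3) (Fin 3) ℝ)
    (hD : HasFDerivAt
      (fun y : EuclideanSpace ℝ (Fin 3) =>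
        (WithLp.toLp 2 (fun i => (z i - y i) / Real.sqrt (‖z - y‖ ^ 2 + δ ^ 2)) : EuclideanSpace ℝ (Fin 3)))
      (Matrix.toEuclideanCLM (𝕜 := ℝ) D) x) :
    Dᵀ * D =
      ((‖z - x‖ ^ 2 + δ ^ 2)⁻¹) •
        ((1 : Matrix (Fin 3) (Fin 3) ℝ) -
          ((‖z - x‖ ^ 2 + 2 * δ ^ 2) / (‖z - x‖ ^ 2 + δ ^ 2) ^ 2) •
            Matrix.vecMulVec (fun i => z i - x i) (fun i => z i - x i)) :=
  stmt_8_general x z hxz δ D hD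
end

section
/- Let x, z ∈ ℝ³ with Δ = ‖z − x‖₂ > 0, δ > 0, and suppose δ/Δ ≤ ζ⁻¹ for some ζ > 0. Define S^δ = (1/(Δ² + δ²))·(I₃ − ((Δ² + 2δ²)/(Δ² + δ²)²)(z − x)(z − x)ᵀ) and S⁰ = (1/Δ²)·(I₃ − (1/Δ²)(z − x)(z − x)ᵀ). Then the spectral norm satisfies ‖S^δ − S⁰‖₂ ≤ Δ⁻²/(1 + ζ²). -/
/-!
`S^δ - S⁰ = a • 1 + b • v vᵀ` with `v = z - x`, a symmetric rank-one perturbation of a multiple of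
the identity. Its eigenvalues are `a = (Δ² + δ²)⁻¹ - Δ⁻²` on `v⊥` and `a + b Δ² = δ⁴ / (Δ² + δ²)³`
along `v`, so its spectral norm is at most `δ² / (Δ² (Δ² + δ²))`, and `δ ζ ≤ Δ` turns this into
`Δ⁻² / (1 + ζ²)`.
-/

open Matrix

open RealInnerProductSpace in
theorem norm_smul_add_inner_smul_le {E : Type*} [NormedAddCommGroup E] [InnerProductSpace ℝ E]
    {a b K : ℝ} {v : E} (hperp : |a| ≤ K) (hpar : |a + b * ‖v‖ ^ 2| ≤ K) (w : E) :
    ‖a • w + (b * ⟪v, w⟫) • v‖ ≤ K * ‖w‖ := by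
  have hK : 0 ≤ K := (abs_nonneg a).trans hperp
  set s := ⟪v, w⟫
  set c := 2 * a * b + b ^ 2 * ‖v‖ ^ 2
  have hexpand : ‖a • w + (b * s) • v‖ ^ 2 = a ^ 2 * ‖w‖ ^ 2 + c * s ^ 2 := by
    rw [norm_add_sq_real, norm_smul, norm_smul, inner_smul_left, inner_smul_right,
      real_inner_comm, Real.norm_eq_abs, Real.norm_eq_abs, abs_mul]
    simp only [conj_trivial, mul_pow, sq_abs]
    ring
  have hcauchy : s ^ 2 ≤ ‖v‖ ^ 2 * ‖w‖ ^ 2 := by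
    rw [← mul_pow, ← sq_abs]
    exact pow_le_pow_left₀ (abs_nonneg _) (abs_real_inner_le_norm v w) 2
  have hperp2 : a ^ 2 ≤ K ^ 2 := sq_le_sq' (abs_le.1 hperp).1 (abs_le.1 hperp).2
  have hpar2 : (a + b * ‖v‖ ^ 2) ^ 2 ≤ K ^ 2 := sq_le_sq' (abs_le.1 hpar).1 (abs_le.1 hpar).2
  rw [← pow_le_pow_iff_left₀ (norm_nonneg _) (by positivity) two_ne_zero, hexpand, mul_pow]
  rcases le_total c 0 with hc | hc
  · nlinarith [mul_nonpos_of_nonpos_of_nonneg hc (sq_nonneg s), sq_nonneg ‖w‖]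
  · -- `a ^ 2 + c * ‖v‖ ^ 2 = (a + b * ‖v‖ ^ 2) ^ 2`
    nlinarith [mul_le_mul_of_nonneg_left hcauchy hc, sq_nonneg ‖w‖]

section RankOnePerturbation

variable {n : Type*} [Fintype n] [DecidableEq n]

theorem toEuclideanCLM_smul_one_add_smul_vecMulVec_apply (a b : ℝ) (v w : EuclideanSpace ℝ n) :
    toEuclideanCLM (𝕜 := ℝ) (a • 1 + b • vecMulVec v v) w = a • w + (b * inner ℝ v w) • v := by
  ext i
  simp only [ofLp_toEuclideanCLM, add_mulVec, smul_mulVec, one_mulVec, vecMulVec_mulVec,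
    EuclideanSpace.inner_eq_star_dotProduct, star_trivial, dotProduct_comm w.ofLp]
  simp [mul_assoc]

theorem norm_toEuclideanCLM_smul_one_add_smul_vecMulVec_le {a b K : ℝ} {v : EuclideanSpace ℝ n}
    (hperp : |a| ≤ K) (hpar : |a + b * ‖v‖ ^ 2| ≤ K) :
    ‖toEuclideanCLM (𝕜 := ℝ) (a • (1 : Matrix n n ℝ) + b • vecMulVec v v)‖ ≤ K := by
  refine ContinuousLinearMap.opNorm_le_bound _ ((abs_nonneg a).trans hperp) fun w => ?_
  rw [toEuclideanCLM_smul_one_add_smul_vecMulVec_apply]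
  exact norm_smul_add_inner_smul_le hperp hpar w

end RankOnePerturbation

section ScalarBounds

variable {D d : ℝ}

theorem abs_inv_add_sub_inv (hD : 0 < D) (hd : 0 ≤ d) :
    |(D + d)⁻¹ - D⁻¹| = d / (D * (D + d)) := by
  rw [abs_sub_comm, abs_of_nonneg (sub_nonneg.2 (inv_anti₀ hD (le_add_of_nonneg_right hd)))]
  field_simp
  ring

theorem inv_add_sub_inv_add_mul_eq (hD : 0 < D) (hd : 0 ≤ d) :
    (D + d)⁻¹ - D⁻¹ + (D⁻¹ * D⁻¹ - (D + d)⁻¹ * ((D + 2 * d) / (D + d) ^ 2)) * D =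
      d ^ 2 / (D + d) ^ 3 := by
  have : 0 < D + d := by positivity
  field_simp
  ring

theorem sq_div_pow_three_le (hD : 0 < D) (hd : 0 ≤ d) :
    d ^ 2 / (D + d) ^ 3 ≤ d / (D * (D + d)) := by
  rw [div_le_div_iff₀ (by positivity) (by positivity)]
  have : d * D ≤ (D + d) ^ 2 := by nlinarith
  nlinarith [mul_le_mul_of_nonneg_left this (by positivity : 0 ≤ d * (D + d))]

theorem div_mul_add_le_inv_div {ζ : ℝ} (hD : 0 < D) (hd : 0 ≤ d) (h : d * ζ ^ 2 ≤ D) :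
    d / (D * (D + d)) ≤ D⁻¹ / (1 + ζ ^ 2) := by
  rw [inv_div_left, ← one_div, div_le_div_iff₀ (by positivity) (by positivity)]
  nlinarith

end ScalarBounds

/-- Spectral-norm perturbation bound: if δ/Δ ≤ ζ⁻¹ with Δ = ‖z−x‖ > 0, then
‖S^δ − S⁰‖₂ ≤ Δ⁻²/(1 + ζ²). -/
theorem stmt_9 (x z : EuclideanSpace ℝ (Fin 3)) (hΔ : 0 < ‖z - x‖) (δ ζ : ℝ)
    (hδ : 0 < δ) (hζ : 0 < ζ) (hratio : δ / ‖z - x‖ ≤ ζ⁻¹)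
    (Sδ S0 : Matrix (Fin 3) (Fin 3) ℝ)
    (hSδ : Sδ = ((‖z - x‖ ^ 2 + δ ^ 2)⁻¹) •
      ((1 : Matrix (Fin 3) (Fin 3) ℝ) -
        ((‖z - x‖ ^ 2 + 2 * δ ^ 2) / (‖z - x‖ ^ 2 + δ ^ 2) ^ 2) •
          Matrix.vecMulVec (fun i => z i - x i) (fun i => z i - x i)))
    (hS0 : S0 = ((‖z - x‖ ^ 2)⁻¹) •
      ((1 : Matrix (Fin 3) (Fin 3) ℝ) -
        ((‖z - x‖ ^ 2)⁻¹) •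
          Matrix.vecMulVec (fun i => z i - x i) (fun i => z i - x i))) :
    ‖Matrix.toEuclideanCLM (𝕜 := ℝ) (Sδ - S0)‖ ≤ (‖z - x‖ ^ 2)⁻¹ / (1 + ζ ^ 2) := by
  have hsmall : δ ^ 2 * ζ ^ 2 ≤ ‖z - x‖ ^ 2 := by
    rw [← mul_pow, mul_comm δ]
    exact pow_le_pow_left₀ (by positivity) ((le_inv_mul_iff₀ hζ).1 ((div_le_iff₀ hΔ).1 hratio)) 2
  set v := z - x
  change Sδ = _ • (_ - _ • vecMulVec v v) at hSδ
  change S0 = _ • (_ - _ • vecMulVec v v) at hS0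
  set D := ‖v‖ ^ 2
  have hD : 0 < D := by positivity
  have hd : 0 ≤ δ ^ 2 := sq_nonneg δ
  have hdiff : Sδ - S0 = ((D + δ ^ 2)⁻¹ - D⁻¹) • 1 +
      (D⁻¹ * D⁻¹ - (D + δ ^ 2)⁻¹ * ((D + 2 * δ ^ 2) / (D + δ ^ 2) ^ 2)) • vecMulVec v v := by
    rw [hSδ, hS0]
    module
  rw [hdiff]
  refine (norm_toEuclideanCLM_smul_one_add_smul_vecMulVec_le
    (abs_inv_add_sub_inv hD hd).le ?_).trans (div_mul_add_le_inv_div hD hd hsmall)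
  rw [inv_add_sub_inv_add_mul_eq hD hd, abs_of_nonneg (by positivity)]
  exact sq_div_pow_three_le hD hd
end

section
/- Suppose R_min > 0, σ_m > 0, M ∈ ℕ, η > 0, ζ > 1, and ‖x − z_j‖₂ ≥ R_min for all j ≤ M. Set s₀ = (η/(η+1))·(R_min²/M)·σ_m²·(1 + ζ²). For any δ ∈ (0, R_min/ζ): if tr(𝒥_δ(x; z_{1:M})⁻¹) = s ≤ s₀, then s/(1+η) ≤ tr(𝒥₀(x; z_{1:M})⁻¹) ≤ s(1+η), and symmetrically with the roles of 𝒥_δ and 𝒥₀ exchanged. -/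
/-! Let `r = ‖z - x‖` and let `p` be the orthogonal projection onto the line through `z - x`.
The summand is `S^δ = (r² + δ²)⁻¹ (1 - p) + δ⁴ (r² + δ²)⁻³ p`, so `S⁰` and `S^δ` commute and their
eigenvalues differ by at most `ε₀ = (R_min² (1 + ζ²))⁻¹` once `r ≥ R_min` and `δζ ≤ R_min`.
Summing, `𝒥₀` and `𝒥_δ` differ by at most `ε = M ε₀ / σ_m²` in the Loewner order.
If `A` is positive definite with `tr A⁻¹ = s`, then `A⁻¹ ≤ s • 1`, i.e. `1 ≤ s • A`; hence
`ε • 1 ≤ (ε s) • A ≤ (η / (1 + η)) • A`, and `B` within `ε` of `A` satisfies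
`A / (1 + η) ≤ B ≤ (1 + η) A`. Inversion is antitone and the trace monotone, which gives the
bounds, since `s ≤ s₀` gives `ε s ≤ η / (1 + η)`. -/

open Matrix

/-- The smoothed information-matrix summand S^δ(x;z) (closed form of
(∂h_δ/∂x)ᵀ(∂h_δ/∂x) with h_δ(x,z) = (z−x)/√(‖z−x‖²+δ²)). -/
noncomputable def Smat (δ : ℝ) (x z : EuclideanSpace ℝ (Fin 3)) : Matrix (Fin 3) (Fin 3) ℝ :=
  ((‖z - x‖ ^ 2 + δ ^ 2)⁻¹) •
    ((1 : Matrix (Fin 3) (Fin 3) ℝ) -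
      ((‖z - x‖ ^ 2 + 2 * δ ^ 2) / (‖z - x‖ ^ 2 + δ ^ 2) ^ 2) •
        Matrix.vecMulVec (fun i => z i - x i) (fun i => z i - x i))

/-- The information matrix 𝒥_δ(x; z_{1:M}) = Σ̄⁻¹ + σ_m⁻² ∑_j S^δ(x; z_j). -/
noncomputable def infoMat (δ σm : ℝ) (Sigbar : Matrix (Fin 3) (Fin 3) ℝ)
    {M : ℕ} (x : EuclideanSpace ℝ (Fin 3)) (z : Fin M → EuclideanSpace ℝ (Fin 3)) :
    Matrix (Fin 3) (Fin 3) ℝ :=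
  Sigbar⁻¹ + (σm ^ 2)⁻¹ • ∑ j, Smat δ x (z j)

open scoped MatrixOrder

theorem IsStarProjection.smul_one_sub_add_smul_le_add_smul_one {R : Type*} [Ring R] [StarRing R]
    [PartialOrder R] [StarOrderedRing R] [Module ℝ R] [SMulPosMono ℝ R] {p : R}
    (hp : IsStarProjection p) {a b c d e : ℝ} (hac : a ≤ c + e) (hbd : b ≤ d + e) :
    a • (1 - p) + b • p ≤ c • (1 - p) + d • p + e • 1 := by
  rw [show c • (1 - p) + d • p + e • 1 = (c + e) • (1 - p) + (d + e) • p by module]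
  exact add_le_add (smul_le_smul_of_nonneg_right hac hp.one_sub_nonneg)
    (smul_le_smul_of_nonneg_right hbd hp.nonneg)

namespace Matrix

variable {n : Type*} [Fintype n] [DecidableEq n]

omit [DecidableEq n] in
theorem trace_mono {A B : Matrix n n ℝ} (h : A ≤ B) : A.trace ≤ B.trace := by
  simpa [trace_sub] using (le_iff.mp h).trace_nonneg

theorem PosSemidef.le_trace_smul_one {A : Matrix n n ℝ} (hA : A.PosSemidef) :
    A ≤ A.trace • (1 : Matrix n n ℝ) := by
  rw [← Algebra.algebraMap_eq_smul_one]
  refine le_algebraMap_of_spectrum_le fun r hr => ?_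
  obtain ⟨i, rfl⟩ := hA.isHermitian.spectrum_real_eq_range_eigenvalues ▸ hr
  rw [hA.isHermitian.trace_eq_sum_eigenvalues]
  simpa using Finset.single_le_sum (fun j _ => hA.eigenvalues_nonneg j) (Finset.mem_univ i)

theorem inv_smul_of_ne_zero {K : Type*} [Field K] {A : Matrix n n K} {c : K} (hc : c ≠ 0)
    (hA : IsUnit A.det) : (c • A)⁻¹ = c⁻¹ • A⁻¹ :=
  inv_eq_left_inv <| by rw [smul_mul_smul_comm, nonsing_inv_mul _ hA, inv_mul_cancel₀ hc, one_smul]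

theorem inv_sub_inv_eq {A B : Matrix n n ℝ} (hA : IsUnit A.det) (hB : IsUnit B.det) :
    A⁻¹ - B⁻¹ = B⁻¹ * (B - A) * B⁻¹ + B⁻¹ * (B - A) * A⁻¹ * ((B - A) * B⁻¹) := by
  simp only [mul_sub, sub_mul, mul_assoc, nonsing_inv_mul _ hB, mul_nonsing_inv _ hA,
    mul_nonsing_inv _ hB, mul_one, one_mul, nonsing_inv_mul_cancel_left _ _ hA]
  abel

theorem PosDef.inv_le_inv_of_le {A B : Matrix n n ℝ} (hA : A.PosDef) (hAB : A ≤ B) :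
    B⁻¹ ≤ A⁻¹ := by
  have hD : (B - A).PosSemidef := le_iff.mp hAB
  have hB : B.PosDef := by simpa using hA.add_posSemidef hD
  have hBinv : (B⁻¹)ᴴ = B⁻¹ := hB.isHermitian.inv.eq
  rw [le_iff, inv_sub_inv_eq hA.det_pos.ne'.isUnit hB.det_pos.ne'.isUnit]
  refine .add ?_ ?_
  · simpa only [hBinv] using hD.conjTranspose_mul_mul_same B⁻¹
  · simpa only [conjTranspose_mul, hBinv, hD.isHermitian.eq, mul_assoc] using
      hA.inv.posSemidef.conjTranspose_mul_mul_same ((B - A) * B⁻¹)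

theorem PosDef.one_le_trace_inv_smul {A : Matrix n n ℝ} (hA : A.PosDef) :
    1 ≤ A⁻¹.trace • A := by
  rcases isEmpty_or_nonempty n with hn | hn
  · exact (Subsingleton.elim _ _).le
  have hs : 0 < A⁻¹.trace := hA.inv.trace_pos
  have h := hA.inv.inv_le_inv_of_le hA.inv.posSemidef.le_trace_smul_one
  rw [inv_smul_of_ne_zero hs.ne' (by simp), inv_one,
    nonsing_inv_nonsing_inv _ hA.det_pos.ne'.isUnit] at h
  simpa [smul_smul, hs.ne'] using smul_le_smul_of_nonneg_left h hs.le

theorem trace_inv_le_of_smul_le {A B : Matrix n n ℝ} (hA : A.PosDef) {c : ℝ} (hc : 0 < c)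
    (h : c • A ≤ B) : B⁻¹.trace ≤ c⁻¹ * A⁻¹.trace := by
  have := trace_mono ((hA.smul hc).inv_le_inv_of_le h)
  rwa [inv_smul_of_ne_zero hc.ne' hA.det_pos.ne'.isUnit, trace_smul] at this

theorem trace_inv_mem_Icc_of_le_add_smul_one {A B : Matrix n n ℝ} (hA : A.PosDef)
    (hB : B.PosDef) {ε η : ℝ} (hε : 0 ≤ ε) (hη : 0 ≤ η) (hBA : B ≤ A + ε • 1)
    (hAB : A ≤ B + ε • 1) (hsmall : ε * A⁻¹.trace ≤ η / (1 + η)) :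
    A⁻¹.trace / (1 + η) ≤ B⁻¹.trace ∧ B⁻¹.trace ≤ A⁻¹.trace * (1 + η) := by
  have hη1 : 0 < 1 + η := by linarith
  have hεA : ε • (1 : Matrix n n ℝ) ≤ (η / (1 + η)) • A := calc
    ε • (1 : Matrix n n ℝ) ≤ ε • (A⁻¹.trace • A) :=
      smul_le_smul_of_nonneg_left hA.one_le_trace_inv_smul hε
    _ = (ε * A⁻¹.trace) • A := smul_smul _ _ _
    _ ≤ (η / (1 + η)) • A := smul_le_smul_of_nonneg_right hsmall hA.posSemidef.nonneg
  constructor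
  · have hBA' : (1 + η)⁻¹ • B ≤ A := calc
      (1 + η)⁻¹ • B ≤ (1 + η)⁻¹ • (A + (η / (1 + η)) • A) :=
        smul_le_smul_of_nonneg_left (hBA.trans (add_le_add_right hεA A)) (by positivity)
      _ = A - (η / (1 + η)) ^ 2 • A := by match_scalars; field_simp; ring
      _ ≤ A := sub_le_self A (smul_nonneg (by positivity) hA.posSemidef.nonneg)
    have := trace_inv_le_of_smul_le hB (inv_pos.mpr hη1) hBA'
    rw [inv_inv] at this
    rw [div_le_iff₀ hη1]; linarith
  · have hAB' : (1 + η)⁻¹ • A ≤ B := calc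
      (1 + η)⁻¹ • A = A - (η / (1 + η)) • A := by match_scalars; field_simp; ring
      _ ≤ A - ε • 1 := sub_le_sub_left hεA A
      _ ≤ B := sub_le_iff_le_add.mpr hAB
    simpa [mul_comm] using trace_inv_le_of_smul_le hA (inv_pos.mpr hη1) hAB'

-- for `v = 0` this is `0`, because `0⁻¹ = 0`
noncomputable def lineProj (v : n → ℝ) : Matrix n n ℝ := (v ⬝ᵥ v)⁻¹ • vecMulVec v v

theorem isStarProjection_lineProj (v : n → ℝ) : IsStarProjection (lineProj v) where
  isIdempotentElem := by
    rw [IsIdempotentElem, lineProj, smul_mul_smul_comm, vecMulVec_mul_vecMulVec, vecMulVec_smul,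
      smul_smul]
    congr 1
    by_cases h : v ⬝ᵥ v = 0 <;> field_simp [h]
  isSelfAdjoint := by
    simp [IsSelfAdjoint, lineProj, star_smul, star_eq_conjTranspose]

end Matrix

section SmoothingGap

variable {R r ζ δ : ℝ}

theorem inv_sq_sub_inv_le (hR : 0 < R) (hr : R ≤ r) (hδ : (δ * ζ) ^ 2 ≤ R ^ 2) :
    (r ^ 2)⁻¹ - (r ^ 2 + δ ^ 2)⁻¹ ≤ (R ^ 2 * (1 + ζ ^ 2))⁻¹ := by
  have hr0 : 0 < r := hR.trans_le hr
  have hR2 : R ^ 2 ≤ r ^ 2 := pow_le_pow_left₀ hR.le hr 2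
  rw [inv_sub_inv (by positivity) (by positivity), add_sub_cancel_left,
    inv_eq_one_div, div_le_div_iff₀ (by positivity) (by positivity)]
  nlinarith [mul_le_mul hR2 (add_le_add_right (hδ.trans hR2) (δ ^ 2)) (by positivity)
    (by positivity)]

theorem pow_four_div_pow_three_le (hR : 0 < R) (hr : R ≤ r) (hδ : (δ * ζ) ^ 2 ≤ R ^ 2) :
    δ ^ 4 / (r ^ 2 + δ ^ 2) ^ 3 ≤ (R ^ 2 * (1 + ζ ^ 2))⁻¹ := by
  have hr0 : 0 < r := hR.trans_le hr
  have hR2 : R ^ 2 ≤ r ^ 2 + δ ^ 2 := by nlinarith [pow_le_pow_left₀ hR.le hr 2]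
  have hδ2 : δ ^ 2 * (1 + ζ ^ 2) ≤ r ^ 2 + δ ^ 2 := by nlinarith
  have hδ1 : δ ^ 2 ≤ r ^ 2 + δ ^ 2 := by nlinarith
  rw [inv_eq_one_div, div_le_div_iff₀ (by positivity) (by positivity)]
  calc δ ^ 4 * (R ^ 2 * (1 + ζ ^ 2)) = R ^ 2 * (δ ^ 2 * (1 + ζ ^ 2)) * δ ^ 2 := by ring
    _ ≤ (r ^ 2 + δ ^ 2) * (r ^ 2 + δ ^ 2) * (r ^ 2 + δ ^ 2) := by gcongr
    _ = 1 * (r ^ 2 + δ ^ 2) ^ 3 := by ring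

end SmoothingGap

theorem Smat_eq (δ : ℝ) {x z : EuclideanSpace ℝ (Fin 3)} (hxz : x ≠ z) :
    Smat δ x z = (‖z - x‖ ^ 2 + δ ^ 2)⁻¹ • (1 - lineProj (fun i => z i - x i)) +
      (δ ^ 4 / (‖z - x‖ ^ 2 + δ ^ 2) ^ 3) • lineProj (fun i => z i - x i) := by
  have hr : (fun i => z i - x i) ⬝ᵥ (fun i => z i - x i) = ‖z - x‖ ^ 2 := by
    rw [EuclideanSpace.real_norm_sq_eq]; simp [dotProduct, sq]
  have hr0 : ‖z - x‖ ≠ 0 := by simpa [sub_eq_zero] using hxz.symm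
  have hP : ‖z - x‖ ^ 2 + δ ^ 2 ≠ 0 := by positivity
  rw [Smat, lineProj, hr]
  match_scalars <;> field_simp
  ring

theorem Smat_nonneg (δ : ℝ) {x z : EuclideanSpace ℝ (Fin 3)} (hxz : x ≠ z) : 0 ≤ Smat δ x z := by
  have hp := isStarProjection_lineProj (fun i => z i - x i)
  rw [Smat_eq δ hxz]
  exact add_nonneg (smul_nonneg (by positivity) hp.one_sub_nonneg)
    (smul_nonneg (by positivity) hp.nonneg)

section Summand

variable {Rmin ζ δ : ℝ} {x z : EuclideanSpace ℝ (Fin 3)}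

theorem Smat_le_Smat_zero_add (hR : 0 < Rmin) (hxz : Rmin ≤ ‖x - z‖)
    (hδ : (δ * ζ) ^ 2 ≤ Rmin ^ 2) :
    Smat δ x z ≤ Smat 0 x z + (Rmin ^ 2 * (1 + ζ ^ 2))⁻¹ • 1 := by
  have hne : x ≠ z := sub_ne_zero.mp (norm_pos_iff.mp (hR.trans_le hxz))
  rw [norm_sub_rev] at hxz
  rw [Smat_eq δ hne, Smat_eq 0 hne]
  refine (isStarProjection_lineProj _).smul_one_sub_add_smul_le_add_smul_one ?_ ?_ <;>
    simp only [ne_eq, OfNat.ofNat_ne_zero, not_false_eq_true, zero_pow, add_zero, zero_div,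
      zero_add]
  · exact (inv_anti₀ (pow_pos (hR.trans_le hxz) 2) (le_add_of_nonneg_right (sq_nonneg δ))).trans
      (le_add_of_nonneg_right (by positivity))
  · exact pow_four_div_pow_three_le hR hxz hδ

theorem Smat_zero_le_Smat_add (hR : 0 < Rmin) (hxz : Rmin ≤ ‖x - z‖)
    (hδ : (δ * ζ) ^ 2 ≤ Rmin ^ 2) :
    Smat 0 x z ≤ Smat δ x z + (Rmin ^ 2 * (1 + ζ ^ 2))⁻¹ • 1 := by
  have hne : x ≠ z := sub_ne_zero.mp (norm_pos_iff.mp (hR.trans_le hxz))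
  rw [norm_sub_rev] at hxz
  rw [Smat_eq δ hne, Smat_eq 0 hne]
  refine (isStarProjection_lineProj _).smul_one_sub_add_smul_le_add_smul_one ?_ ?_ <;>
    simp only [ne_eq, OfNat.ofNat_ne_zero, not_false_eq_true, zero_pow, add_zero, zero_div]
  · linarith [inv_sq_sub_inv_le hR hxz hδ]
  · positivity

end Summand

section InfoMat

variable {σm : ℝ} {Sigbar : Matrix (Fin 3) (Fin 3) ℝ} {M : ℕ} {x : EuclideanSpace ℝ (Fin 3)}
  {z : Fin M → EuclideanSpace ℝ (Fin 3)}

theorem infoMat_posDef {δ : ℝ} (hSig : Sigbar.PosDef) (h : ∀ j, 0 ≤ Smat δ x (z j)) :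
    (infoMat δ σm Sigbar x z).PosDef :=
  hSig.inv.add_posSemidef
    (smul_nonneg (by positivity) (Finset.sum_nonneg fun j _ => h j)).posSemidef

theorem infoMat_le_add_smul_one {δ₁ δ₂ ε₀ : ℝ}
    (h : ∀ j, Smat δ₁ x (z j) ≤ Smat δ₂ x (z j) + ε₀ • 1) :
    infoMat δ₁ σm Sigbar x z ≤ infoMat δ₂ σm Sigbar x z + ((σm ^ 2)⁻¹ * (M * ε₀)) • 1 := calc
  infoMat δ₁ σm Sigbar x z ≤ Sigbar⁻¹ + (σm ^ 2)⁻¹ • ∑ j, (Smat δ₂ x (z j) + ε₀ • 1) := by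
    unfold infoMat
    gcongr with j
    exact h j
  _ = infoMat δ₂ σm Sigbar x z + ((σm ^ 2)⁻¹ * (M * ε₀)) • 1 := by
    simp only [infoMat, Finset.sum_add_distrib, Finset.sum_const, Finset.card_univ,
      Fintype.card_fin, ← Nat.cast_smul_eq_nsmul ℝ]
    module

end InfoMat

theorem stmt_14_general (Rmin σm η ζ : ℝ) (M : ℕ)
    (hR : 0 < Rmin) (hη : 0 < η) (hζ : 1 < ζ)
    (Sigbar : Matrix (Fin 3) (Fin 3) ℝ) (hSig : Sigbar.PosDef)
    (z : Fin M → EuclideanSpace ℝ (Fin 3)) (δ : ℝ) (hδ0 : 0 < δ) (hδ1 : δ < Rmin / ζ)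
    (s0 : ℝ) (hs0 : s0 = (η / (η + 1)) * (Rmin ^ 2 / M) * σm ^ 2 * (1 + ζ ^ 2)) :
    ∀ x : EuclideanSpace ℝ (Fin 3), (∀ j, Rmin ≤ ‖x - z j‖) →
      ∀ s : ℝ,
        (((infoMat δ σm Sigbar x z)⁻¹).trace = s → s ≤ s0 →
          s / (1 + η) ≤ ((infoMat 0 σm Sigbar x z)⁻¹).trace ∧
          ((infoMat 0 σm Sigbar x z)⁻¹).trace ≤ s * (1 + η)) ∧
        (((infoMat 0 σm Sigbar x z)⁻¹).trace = s → s ≤ s0 →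
          s / (1 + η) ≤ ((infoMat δ σm Sigbar x z)⁻¹).trace ∧
          ((infoMat δ σm Sigbar x z)⁻¹).trace ≤ s * (1 + η)) := by
  intro x hx s
  have hδζ : (δ * ζ) ^ 2 ≤ Rmin ^ 2 :=
    pow_le_pow_left₀ (by positivity) ((lt_div_iff₀ (by positivity)).mp hδ1).le 2
  have hxz j : x ≠ z j := sub_ne_zero.mp (norm_pos_iff.mp (hR.trans_le (hx j)))
  have hJδ := infoMat_posDef (σm := σm) hSig fun j => Smat_nonneg δ (hxz j)
  have hJ0 := infoMat_posDef (σm := σm) hSig fun j => Smat_nonneg 0 (hxz j)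
  have hJδ_le := infoMat_le_add_smul_one (σm := σm) (Sigbar := Sigbar)
    fun j => Smat_le_Smat_zero_add hR (hx j) hδζ
  have hJ0_le := infoMat_le_add_smul_one (σm := σm) (Sigbar := Sigbar)
    fun j => Smat_zero_le_Smat_add hR (hx j) hδζ
  set ε := (σm ^ 2)⁻¹ * (M * (Rmin ^ 2 * (1 + ζ ^ 2))⁻¹)
  have hε : 0 ≤ ε := by positivity
  -- each quotient `a / a` is `0` or `1`, so `M = 0` and `σm = 0` need no separate treatment
  have hεs0 : ε * s0 ≤ η / (1 + η) := calc
    ε * s0 = η / (1 + η) * ((M / M) * (σm ^ 2 / σm ^ 2) *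
        ((Rmin ^ 2 * (1 + ζ ^ 2)) / (Rmin ^ 2 * (1 + ζ ^ 2)))) := by rw [hs0]; ring
    _ ≤ η / (1 + η) * 1 := by
      gcongr
      exact mul_le_one₀ (mul_le_one₀ (div_self_le_one _) (by positivity) (div_self_le_one _))
        (by positivity) (div_self_le_one _)
    _ = η / (1 + η) := mul_one _
  refine ⟨fun hs hss0 => ?_, fun hs hss0 => ?_⟩ <;> subst hs
  · exact Matrix.trace_inv_mem_Icc_of_le_add_smul_one hJδ hJ0 hε hη.le hJ0_le hJδ_le
      ((mul_le_mul_of_nonneg_left hss0 hε).trans hεs0)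
  · exact Matrix.trace_inv_mem_Icc_of_le_add_smul_one hJ0 hJδ hε hη.le hJδ_le hJ0_le
      ((mul_le_mul_of_nonneg_left hss0 hε).trans hεs0)

/-- Theorem 1: with s₀ = (η/(η+1))·(R_min²/M)·σ_m²·(1+ζ²) and δ ∈ (0, R_min/ζ),
if tr(𝒥_δ(x)⁻¹) = s ≤ s₀ then s/(1+η) ≤ tr(𝒥₀(x)⁻¹) ≤ s(1+η); and the same
implication with the roles of 𝒥_δ and 𝒥₀ reversed. -/
theorem stmt_14 (Rmin σm η ζ : ℝ) (M : ℕ)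
    (hR : 0 < Rmin) (hσ : 0 < σm) (hη : 0 < η) (hζ : 1 < ζ)
    (Sigbar : Matrix (Fin 3) (Fin 3) ℝ) (hSig : Sigbar.PosDef)
    (z : Fin M → EuclideanSpace ℝ (Fin 3)) (δ : ℝ) (hδ0 : 0 < δ) (hδ1 : δ < Rmin / ζ)
    (s0 : ℝ) (hs0 : s0 = (η / (η + 1)) * (Rmin ^ 2 / M) * σm ^ 2 * (1 + ζ ^ 2)) :
    ∀ x : EuclideanSpace ℝ (Fin 3), (∀ j, Rmin ≤ ‖x - z j‖) →
      ∀ s : ℝ,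
        (((infoMat δ σm Sigbar x z)⁻¹).trace = s → s ≤ s0 →
          s / (1 + η) ≤ ((infoMat 0 σm Sigbar x z)⁻¹).trace ∧
          ((infoMat 0 σm Sigbar x z)⁻¹).trace ≤ s * (1 + η)) ∧
        (((infoMat 0 σm Sigbar x z)⁻¹).trace = s → s ≤ s0 →
          s / (1 + η) ≤ ((infoMat δ σm Sigbar x z)⁻¹).trace ∧
          ((infoMat δ σm Sigbar x z)⁻¹).trace ≤ s * (1 + η)) :=
  stmt_14_general Rmin σm η ζ M hR hη hζ Sigbar hSig z δ hδ0 hδ1 s0 hs0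
end
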